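/- Let p ≤ 0 and q > 2/n for some integer n ≥ 3, and define ψ(s) = s(s+1)^{q-1} and G(s) = ∫_{1}^{s} ∫_{1}^{σ} (τ+1)^{-p}/ψ(τ) dτ dσ. Then there exists L > 0 such that s²/ψ(s) ≤ L(G(s) + s + 1) for all s > 0. -/

import Mathlib

open MeasureTheory intervalIntegral Set

/-!
Since `p ≤ 0 < q`, the integrand of `G` is at least `(τ + 1) ^ (-q) ≥ (s + 1) ^ (-q)` on `[1, s]`,
so `G s ≥ (s + 1) ^ (-q) (s - 1) ^ 2 / 2`, while `s ^ 2 / ψ s = s (s + 1) (s + 1) ^ (-q)`;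
the quadratic `s (s + 1)` is controlled by `2 (s - 1) ^ 2 + 4 (s + 1)`.
For `s < 1` the left side is at most `s + 1` and `G s ≥ 0`.
-/

theorem integral_integral_nonneg {f : ℝ → ℝ} {a b : ℝ} (hf : ∀ x ∈ uIcc a b, 0 ≤ f x) :
    0 ≤ ∫ σ in a..b, ∫ τ in a..σ, f τ := by
  rcases le_total a b with hab | hba
  · refine integral_nonneg hab fun σ hσ => integral_nonneg hσ.1 fun τ hτ => hf τ ?_
    rw [uIcc_of_le hab]
    exact ⟨hτ.1, hτ.2.trans hσ.2⟩
  · rw [integral_symm, neg_nonneg, ← neg_nonneg, ← intervalIntegral.integral_neg]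
    refine integral_nonneg hba fun σ hσ => ?_
    rw [integral_symm, neg_neg]
    refine integral_nonneg hσ.2 fun τ hτ => hf τ ?_
    rw [uIcc_of_ge hba]
    exact ⟨hσ.1.trans hτ.1, hτ.2⟩

theorem mul_sq_div_two_le_integral_integral {f : ℝ → ℝ} {a b c : ℝ} (hab : a ≤ b)
    (hf : IntervalIntegrable f volume a b) (hc : ∀ x ∈ Icc a b, c ≤ f x) :
    c * (b - a) ^ 2 / 2 ≤ ∫ σ in a..b, ∫ τ in a..σ, f τ := by
  have inner : ∀ σ ∈ Icc a b, c * (σ - a) ≤ ∫ τ in a..σ, f τ := fun σ hσ => by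
    have h := integral_mono_on hσ.1 intervalIntegrable_const
      (hf.mono_set (uIcc_subset_uIcc left_mem_uIcc (by rw [uIcc_of_le hab]; exact hσ)))
      fun τ hτ => hc τ ⟨hτ.1, hτ.2.trans hσ.2⟩
    rwa [intervalIntegral.integral_const, smul_eq_mul, mul_comm] at h
  have hprim : ContinuousOn (fun σ => ∫ τ in a..σ, f τ) (uIcc a b) :=
    continuousOn_primitive_interval' hf left_mem_uIcc
  calc c * (b - a) ^ 2 / 2 = ∫ σ in a..b, c * (σ - a) := by
        rw [intervalIntegral.integral_const_mul, integral_comp_sub_right (fun x => x), sub_self,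
          integral_id]
        ring
    _ ≤ _ := integral_mono_on hab
        ((by fun_prop : Continuous fun σ => c * (σ - a)).intervalIntegrable (μ := volume) a b)
        hprim.intervalIntegrable inner

theorem rpow_neg_le_rpow_neg_div {p q τ : ℝ} (hp : p ≤ 0) (hτ : 0 < τ) :
    (τ + 1) ^ (-q) ≤ (τ + 1) ^ (-p) / (τ * (τ + 1) ^ (q - 1)) := by
  have hτ1 : 0 < τ + 1 := by linarith
  have hsplit : (τ + 1) ^ (-q) = 1 / ((τ + 1) ^ (q - 1) * (τ + 1)) := by
    rw [Real.rpow_neg hτ1.le, ← one_div, ← Real.rpow_add_one hτ1.ne', sub_add_cancel]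
  rw [hsplit]
  exact div_le_div₀ (by positivity) (Real.one_le_rpow (by linarith) (by linarith))
    (by positivity) (by rw [mul_comm]; gcongr; linarith)

theorem continuousOn_rpow_neg_div (p q : ℝ) :
    ContinuousOn (fun τ : ℝ => (τ + 1) ^ (-p) / (τ * (τ + 1) ^ (q - 1))) (Ioi 0) := by
  intro τ hτ
  have hτ0 : 0 < τ := hτ
  have hτ1 : 0 < τ + 1 := by linarith
  exact ContinuousAt.continuousWithinAt (by fun_prop (disch := first | exact Or.inl hτ1.ne' | positivity))

theorem sq_div_mul_rpow {q s : ℝ} (hs : 0 < s) :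
    s ^ 2 / (s * (s + 1) ^ (q - 1)) = s * (s + 1) * (s + 1) ^ (-q) := by
  have hs1 : 0 < s + 1 := by linarith
  rw [Real.rpow_sub hs1, Real.rpow_neg hs1.le, Real.rpow_one]
  field_simp

theorem stmt2_general (n : ℕ) (p q : ℝ) (hp : p ≤ 0)
    (hq : 2 / (n : ℝ) < q)
    (ψ G : ℝ → ℝ)
    (hψ : ∀ s, ψ s = s * (s + 1) ^ (q - 1))
    (hG : ∀ s, G s = ∫ σ in (1:ℝ)..s, ∫ τ in (1:ℝ)..σ, (τ + 1) ^ (-p) / ψ τ) :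
    ∃ L > (0:ℝ), ∀ s > (0:ℝ), s ^ 2 / ψ s ≤ L * (G s + s + 1) := by
  obtain rfl : ψ = _ := funext hψ
  beta_reduce at hG
  have hq0 : 0 ≤ q := le_trans (by positivity) hq.le
  refine ⟨4, by norm_num, fun s hs => ?_⟩
  set c := (s + 1) ^ (-q)
  have hc0 : 0 ≤ c := by positivity
  have hc1 : c ≤ 1 := Real.rpow_le_one_of_one_le_of_nonpos (by linarith) (by linarith)
  have hf : ∀ τ ∈ Ioc 0 s, c ≤ (τ + 1) ^ (-p) / (τ * (τ + 1) ^ (q - 1)) := fun τ hτ =>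
    (Real.rpow_le_rpow_of_nonpos (by linarith [hτ.1]) (by linarith [hτ.2]) (by linarith)).trans
      (rpow_neg_le_rpow_neg_div hp hτ.1)
  have hG0 : 0 ≤ G s := hG s ▸ integral_integral_nonneg fun τ hτ => by
    have : 0 < τ := lt_of_lt_of_le (lt_min one_pos hs) hτ.1
    positivity
  rw [sq_div_mul_rpow hs]
  rcases lt_or_ge s 1 with hs_lt | hs_ge
  · calc s * (s + 1) * c ≤ 1 * (s + 1) * 1 := by gcongr
      _ ≤ 4 * (G s + s + 1) := by linarith
  · have hGc : c * (s - 1) ^ 2 / 2 ≤ G s := hG s ▸ mul_sq_div_two_le_integral_integral hs_ge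
      ((continuousOn_rpow_neg_div p q).mono fun τ hτ => by
        rw [uIcc_of_le hs_ge] at hτ; exact lt_of_lt_of_le one_pos hτ.1).intervalIntegrable
      fun τ hτ => hf τ ⟨by linarith [hτ.1], hτ.2⟩
    calc s * (s + 1) * c ≤ (2 * (s - 1) ^ 2 + 4 * (s + 1)) * c := by
          gcongr; nlinarith
      _ ≤ 4 * (G s + s + 1) := by nlinarith [mul_le_mul_of_nonneg_left hc1 hs.le]

theorem stmt2 (n : ℕ) (hn : 3 ≤ n) (p q : ℝ) (hp : p ≤ 0)
    (hq : 2 / (n : ℝ) < q)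
    (ψ G : ℝ → ℝ)
    (hψ : ∀ s, ψ s = s * (s + 1) ^ (q - 1))
    (hG : ∀ s, G s = ∫ σ in (1:ℝ)..s, ∫ τ in (1:ℝ)..σ, (τ + 1) ^ (-p) / ψ τ) :
    ∃ L > (0:ℝ), ∀ s > (0:ℝ), s ^ 2 / ψ s ≤ L * (G s + s + 1) :=
  stmt2_general n p q hp hq ψ G hψ hG
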